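/- arXiv:1312.2738 — 11 statements merged into one kernel-verified Lean document; each statement's English description precedes it below -/
import Mathlib

section
/- For each position i ∈ {1,…,n}, let L_i be the maximum, over all positions j ≠ i, of the length of the longest common prefix of the suffixes S[i..n] and S[j..n]. Then LSUS_i exists if and only if i + L_i ≤ n, and in that case LSUS_i = S[i .. i+L_i]. -/
variable {α : Type*}

/-- `S[i..j]` is a unique substring of the string `S[1..n]`: it is a valid substring
(`1 ≤ i ≤ j ≤ n`) and there is no other starting position `i' ≠ i` (with
`i' + (j-i) ≤ n`) where the same string of characters occurs. -/
def IsUnique (S : ℕ → α) (n i j : ℕ) : Prop :=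
  1 ≤ i ∧ i ≤ j ∧ j ≤ n ∧
    ¬ ∃ i', 1 ≤ i' ∧ i' ≠ i ∧ i' + (j - i) ≤ n ∧
      ∀ d ≤ j - i, S (i' + d) = S (i + d)

/-- `S[i..j]` is a shortest unique substring covering position `k` (an `SUS_k`). -/
def IsSUS (S : ℕ → α) (n k i j : ℕ) : Prop :=
  IsUnique S n i j ∧ i ≤ k ∧ k ≤ j ∧
    ∀ i' j', IsUnique S n i' j' → i' ≤ k → k ≤ j' → j - i ≤ j' - i'

/-- `S[k..j]` is the left-bounded shortest unique substring starting at `k`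
(`LSUS_k`): the shortest unique substring starting at position `k`. -/
def IsLSUS (S : ℕ → α) (n k j : ℕ) : Prop :=
  IsUnique S n k j ∧ ∀ j', IsUnique S n k j' → j ≤ j'

/-- Let `L` be the maximum, over all positions `j ≠ i`, of the length of the longest
common prefix of the suffixes `S[i..n]` and `S[j..n]` (expressed as the supremum of all
common-prefix lengths `ℓ` realized by some `j ≠ i`). Then `LSUS_i` exists iff
`i + L ≤ n`, and in that case `LSUS_i = S[i..i+L]`. -/
theorem lsus_from_lcp (S : ℕ → α) (n i L : ℕ) (hn : 1 ≤ n) (hi1 : 1 ≤ i) (hin : i ≤ n)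
    (hL : L = sSup {ℓ : ℕ | ∃ j, 1 ≤ j ∧ j ≤ n ∧ j ≠ i ∧
      i + ℓ ≤ n + 1 ∧ j + ℓ ≤ n + 1 ∧ ∀ d < ℓ, S (i + d) = S (j + d)}) :
    ((∃ j, IsLSUS S n i j) ↔ i + L ≤ n) ∧ (i + L ≤ n → IsLSUS S n i (i + L)) := by
  set T := {ℓ : ℕ | ∃ j, 1 ≤ j ∧ j ≤ n ∧ j ≠ i ∧
      i + ℓ ≤ n + 1 ∧ j + ℓ ≤ n + 1 ∧ ∀ d < ℓ, S (i + d) = S (j + d)} with hT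
  have hbdd : BddAbove T := by
    refine ⟨n + 1, fun ℓ hℓ => ?_⟩
    obtain ⟨j, _, _, _, h4, _, _⟩ := hℓ
    omega
  have hmem : ∀ ℓ, 1 ≤ ℓ → (ℓ ∈ T ↔ ℓ ≤ L) := by
    intro ℓ hℓ1
    constructor
    · intro h; rw [hL]; exact le_csSup hbdd h
    · intro h
      by_cases hne : T.Nonempty
      · have hLT : L ∈ T := hL ▸ Nat.sSup_mem hne hbdd
        obtain ⟨j, hj1, hj2, hj3, hj4, hj5, hj6⟩ := hLT
        exact ⟨j, hj1, hj2, hj3, by omega, by omega, fun d hd => hj6 d (by omega)⟩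
      · exfalso
        have : L = 0 := by
          rw [hL, Set.not_nonempty_iff_eq_empty.mp hne, csSup_empty]; rfl
        omega
  have huniq : ∀ j, IsUnique S n i j ↔ (i + L ≤ j ∧ j ≤ n) := by
    intro j
    constructor
    · rintro ⟨h1, h2, h3, h4⟩
      refine ⟨?_, h3⟩
      by_contra hlt
      push_neg at hlt
      have hmT : (j - i + 1) ∈ T := (hmem (j - i + 1) (by omega)).2 (by omega)
      obtain ⟨j', hj1, hj2, hj3, hj4, hj5, hj6⟩ := hmT
      exact h4 ⟨j', hj1, hj3, by omega, fun d hd => (hj6 d (by omega)).symm⟩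
    · rintro ⟨h1, h2⟩
      refine ⟨hi1, by omega, h2, ?_⟩
      rintro ⟨i', hi'1, hi'2, hi'3, hi'4⟩
      have hmT : (j - i + 1) ∈ T :=
        ⟨i', hi'1, by omega, hi'2, by omega, by omega,
          fun d hd => (hi'4 d (by omega)).symm⟩
      have := (hmem (j - i + 1) (by omega)).1 hmT
      omega
  have hsecond : i + L ≤ n → IsLSUS S n i (i + L) := by
    intro h
    refine ⟨(huniq (i + L)).2 ⟨le_refl _, h⟩, fun j' hj' => ((huniq j').1 hj').1⟩
  refine ⟨⟨fun ⟨j, hj, _⟩ => ?_, fun h => ⟨i + L, hsecond h⟩⟩, hsecond⟩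
  have := (huniq j).1 hj
  omega
end

section
/- Every shortest unique substring is either an LSUS or an extension of an LSUS: if S[i..j] is a shortest unique substring covering some position k (with i ≤ k ≤ j), then LSUS_i exists and LSUS_i is a prefix of S[i..j] (i.e., the right boundary of LSUS_i is at most j). -/
variable {α : Type*}

/-- Every shortest unique substring is either an LSUS or an extension of an LSUS:
if `S[i..j]` is a shortest unique substring covering some position `k`, then `LSUS_i`
exists and its right boundary is at most `j`. -/
theorem sus_is_lsus_or_extension (S : ℕ → α) (n k i j : ℕ)
    (h : IsSUS S n k i j) :
    ∃ j₀, IsLSUS S n i j₀ ∧ j₀ ≤ j := by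
  classical
  have hex : ∃ j', IsUnique S n i j' := ⟨j, h.1⟩
  refine ⟨Nat.find hex, ⟨Nat.find_spec hex, fun j' hj' => Nat.find_min' hex hj'⟩,
    Nat.find_min' hex h.1⟩
end

section
/- Let k ∈ {2,…,n} and suppose S[i..k] is a shortest unique substring covering k that is a proper extension of an LSUS, i.e., LSUS_i exists and its right boundary is strictly less than k. Then (1) S[i..k−1] is the one and only shortest unique substring covering position k−1 (so SUS_{k−1} ends at the character S[k−1]), and (2) S[i..k] equals the substring SUS_{k−1} appended by the character S[k]. -/
variable {α : Type*}

/-- Any right-extension (within the string) of a unique substring is unique. -/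
lemma isUnique_ext {S : ℕ → α} {n i j j₂ : ℕ} (h : IsUnique S n i j) (hj : j ≤ j₂)
    (hn : j₂ ≤ n) : IsUnique S n i j₂ := by
  obtain ⟨h1, hij, hjn, hno⟩ := h
  refine ⟨h1, hij.trans hj, hn, ?_⟩
  rintro ⟨i', hi'1, hne, hle, hmatch⟩
  exact hno ⟨i', hi'1, hne, by omega, fun d hd => hmatch d (by omega)⟩

/-- If `S[i..k]` (for `2 ≤ k ≤ n`) is a shortest unique substring covering `k` which is
a proper extension of an LSUS (`LSUS_i` exists and ends strictly before `k`), then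
`S[i..k-1]` is the one and only shortest unique substring covering `k-1` (so `SUS_{k-1}`
ends at the character `S[k-1]`); consequently `S[i..k]` is `SUS_{k-1}` appended by the
character `S[k]`. -/
theorem sus_proper_extension_prev (S : ℕ → α) (n k i : ℕ) (hk2 : 2 ≤ k) (hkn : k ≤ n)
    (hsus : IsSUS S n k i k) (hext : ∃ j₀, IsLSUS S n i j₀ ∧ j₀ < k) :
    IsSUS S n (k - 1) i (k - 1) ∧
      ∀ i' j', IsSUS S n (k - 1) i' j' → i' = i ∧ j' = k - 1 := by
  obtain ⟨huk, hik, hkk, hmin⟩ := hsus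
  obtain ⟨j₀, ⟨hu0, _⟩, hj0k⟩ := hext
  have hij0 : i ≤ j₀ := hu0.2.1
  have hu' : IsUnique S n i (k - 1) := isUnique_ext hu0 (by omega) (by omega)
  have hmin' : ∀ i' j', IsUnique S n i' j' → i' ≤ k - 1 → k - 1 ≤ j' →
      k - 1 - i ≤ j' - i' := by
    intro i' j' hu hik' hkj'
    rcases le_or_gt k j' with h | h
    · have := hmin i' j' hu (by omega) h
      omega
    · have hu2 : IsUnique S n i' k := isUnique_ext hu (by omega) hkn
      have := hmin i' k hu2 (by omega) le_rfl
      have := hu.2.1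
      omega
  have hsus' : IsSUS S n (k - 1) i (k - 1) := ⟨hu', by omega, le_refl _, hmin'⟩
  refine ⟨hsus', ?_⟩
  rintro i' j' ⟨hu2, hik2, hkj2, hmin2⟩
  have hlen1 := hmin2 i (k - 1) hu' (by omega) le_rfl
  have hlen2 := hmin' i' j' hu2 hik2 hkj2
  have hj'lt : j' < k := by
    by_contra h
    push_neg at h
    have := hmin i' j' hu2 (by omega) h
    omega
  have hii' : i' ≤ j' := hu2.2.1
  constructor <;> omega
end

section
/- If LSUS_k exists, then LSUS_i exists for every i with 1 ≤ i ≤ k; that is, if some unique substring of S starts at position k, then for every i ≤ k some unique substring of S starts at position i. -/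
variable {α : Type*}

/-- If `LSUS_k` exists, then `LSUS_i` exists for every `i` with `1 ≤ i ≤ k`. -/
theorem lsus_exists_downward (S : ℕ → α) (n k : ℕ) (hk1 : 1 ≤ k) (hkn : k ≤ n)
    (h : ∃ j, IsLSUS S n k j) :
    ∀ i, 1 ≤ i → i ≤ k → ∃ j, IsLSUS S n i j := by
  classical
  obtain ⟨j, hj, _⟩ := h
  intro i hi1 hik
  have hunique : IsUnique S n i j := by
    obtain ⟨hk1', hkj, hjn, hno⟩ := hj
    refine ⟨hi1, le_trans hik hkj, hjn, ?_⟩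
    rintro ⟨i', hi'1, hi'ne, hi'n, hmatch⟩
    apply hno
    refine ⟨i' + (k - i), by omega, by omega, by omega, ?_⟩
    intro d hd
    have h1 := hmatch ((k - i) + d) (by omega)
    have e1 : i' + (k - i) + d = i' + ((k - i) + d) := by omega
    have e2 : i + ((k - i) + d) = k + d := by omega
    rw [e1, h1, e2]
  have hne : ∃ j, IsUnique S n i j := ⟨j, hunique⟩
  refine ⟨Nat.find hne, Nat.find_spec hne, fun j' hj' => Nat.find_min' hne hj'⟩
end

section
/- If LSUS_k does not exist, then LSUS_i does not exist for every i with k ≤ i ≤ n; that is, if no unique substring of S starts at position k, then for every i ≥ k no unique substring of S starts at position i. -/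
variable {α : Type*}

/-- If `LSUS_k` does not exist, then `LSUS_i` does not exist for every `i` with
`k ≤ i ≤ n`. -/
theorem lsus_not_exists_upward (S : ℕ → α) (n k : ℕ) (hk1 : 1 ≤ k) (hkn : k ≤ n)
    (h : ¬ ∃ j, IsLSUS S n k j) :
    ∀ i, k ≤ i → i ≤ n → ¬ ∃ j, IsLSUS S n i j := by
  rintro i hki hin ⟨j, hU, -⟩
  obtain ⟨-, hij, hjn, hno⟩ := hU
  -- `S[k..j]` is unique
  have hUk : IsUnique S n k j := by
    refine ⟨hk1, le_trans hki hij, hjn, ?_⟩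
    rintro ⟨k', hk'1, hk'ne, hk'len, hmatch⟩
    refine hno ⟨k' + (i - k), by omega, by omega, by omega, ?_⟩
    intro d hd
    have := hmatch ((i - k) + d) (by omega)
    convert this using 2 <;> omega
  -- a minimal unique substring starting at `k` gives an LSUS at `k`
  have : DecidablePred (IsUnique S n k) := Classical.decPred _
  have hex : ∃ j, IsUnique S n k j := ⟨j, hUk⟩
  exact h ⟨Nat.find hex, Nat.find_spec hex, fun j' hj' => Nat.find_min' hex hj'⟩
end

section
/- For every i ∈ {2,…,n}, if LSUS_i exists then LSUS_{i−1} also exists and |LSUS_i| ≥ |LSUS_{i−1}| − 1. -/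
variable {α : Type*}

/-- Extending a unique substring one position to the left keeps it unique. -/
lemma isUnique_extend_left (S : ℕ → α) (n i j : ℕ) (hi2 : 2 ≤ i)
    (h : IsUnique S n i j) : IsUnique S n (i - 1) j := by
  obtain ⟨h1, hij, hjn, hnex⟩ := h
  refine ⟨by omega, by omega, hjn, ?_⟩
  rintro ⟨i', hi'1, hne, hi'n, hmatch⟩
  apply hnex
  refine ⟨i' + 1, by omega, by omega, by omega, ?_⟩
  intro d hd
  have h1 := hmatch (d + 1) (by omega)
  have e1 : i' + 1 + d = i' + (d + 1) := by omega
  have e2 : i + d = i - 1 + (d + 1) := by omega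
  rw [e1, e2, h1]

/-- For every `i ∈ {2,…,n}`, if `LSUS_i` exists then `LSUS_{i-1}` also exists and
`|LSUS_i| ≥ |LSUS_{i-1}| − 1`, i.e. `|LSUS_{i-1}| ≤ |LSUS_i| + 1`. -/
theorem lsus_length_step (S : ℕ → α) (n i j : ℕ) (hi2 : 2 ≤ i) (hin : i ≤ n)
    (hj : IsLSUS S n i j) :
    ∃ j', IsLSUS S n (i - 1) j' ∧ j' - (i - 1) + 1 ≤ (j - i + 1) + 1 := by
  obtain ⟨hu, _⟩ := hj
  have hext : IsUnique S n (i - 1) j := isUnique_extend_left S n i j hi2 hu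
  have hne : {j' | IsUnique S n (i - 1) j'}.Nonempty := ⟨j, hext⟩
  set j₀ := sInf {j' | IsUnique S n (i - 1) j'} with hj₀
  have hmem : IsUnique S n (i - 1) j₀ := Nat.sInf_mem hne
  have hle : j₀ ≤ j := Nat.sInf_le hext
  have hij : i ≤ j := hu.2.1
  refine ⟨j₀, ⟨hmem, fun j' hj' => Nat.sInf_le hj'⟩, by omega⟩
end

section
/- The right boundaries of the LSUSes are nondecreasing: for every i ∈ {2,…,n}, if LSUS_i exists then the right boundary of LSUS_i is greater than or equal to the right boundary of LSUS_{i−1}. Consequently, if LSUS_k exists, then the maximum right boundary among LSUS_1, …, LSUS_k equals the right boundary of LSUS_k. -/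
variable {α : Type*}

/-- Extending a unique substring one position to the left keeps it unique. -/
lemma isUnique_pred (S : ℕ → α) (n i j : ℕ) (h2 : 2 ≤ i) (h : IsUnique S n i j) :
    IsUnique S n (i - 1) j := by
  obtain ⟨h1, hij, hjn, hno⟩ := h
  refine ⟨by omega, by omega, hjn, ?_⟩
  rintro ⟨i', h1', hne, hbd, hmatch⟩
  apply hno
  refine ⟨i' + 1, by omega, by omega, by omega, ?_⟩
  intro d hd
  have hm := hmatch (d + 1) (by omega)
  have e1 : i' + (d + 1) = i' + 1 + d := by ring
  have e2 : i - 1 + (d + 1) = i + d := by omega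
  rw [e1, e2] at hm
  exact hm

lemma exists_isLSUS (S : ℕ → α) (n k j : ℕ) (h : IsUnique S n k j) :
    ∃ j₀, IsLSUS S n k j₀ := by
  obtain ⟨m, hm, hmin⟩ := Nat.lt_wfRel.wf.has_min {j' | IsUnique S n k j'} ⟨j, h⟩
  exact ⟨m, hm, fun j' hj' => not_lt.mp (hmin j' hj')⟩

lemma lsus_step (S : ℕ → α) (n i j j' : ℕ) (h2 : 2 ≤ i)
    (hj : IsLSUS S n i j) (hj' : IsLSUS S n (i - 1) j') : j' ≤ j :=
  hj'.2 j (isUnique_pred S n i j h2 hj.1)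

lemma lsus_main (S : ℕ → α) (n : ℕ) : ∀ k j, IsLSUS S n k j →
    ∀ i j', 1 ≤ i → i ≤ k → IsLSUS S n i j' → j' ≤ j := by
  intro k
  induction k with
  | zero => intro j hj i j' h1 h2 hj'; omega
  | succ m ih =>
    intro j hj i j' hi1 hik hj'
    rcases Nat.lt_or_ge i (m + 1) with hlt | hge
    · have h2 : 2 ≤ m + 1 := by omega
      obtain ⟨j₀, hj₀⟩ := exists_isLSUS S n (m + 1 - 1) j (isUnique_pred S n (m + 1) j h2 hj.1)
      have hj₀' : IsLSUS S n m j₀ := by simpa using hj₀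
      have h1 : j' ≤ j₀ := ih j₀ hj₀' i j' hi1 (by omega) hj'
      have h2' : j₀ ≤ j := lsus_step S n (m + 1) j j₀ h2 hj hj₀
      omega
    · have : i = m + 1 := by omega
      subst this
      exact hj'.2 j hj.1

/-- The right boundaries of the LSUSes are nondecreasing: for every `i ∈ {2,…,n}`, if
`LSUS_i` exists then its right boundary is at least the right boundary of `LSUS_{i-1}`.
Consequently, if `LSUS_k` exists, the maximum right boundary among
`LSUS_1, …, LSUS_k` equals the right boundary of `LSUS_k`. -/
theorem lsus_right_boundary_mono (S : ℕ → α) (n : ℕ) :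
    (∀ i j j', 2 ≤ i → i ≤ n → IsLSUS S n i j → IsLSUS S n (i - 1) j' → j' ≤ j) ∧
    (∀ k j, 1 ≤ k → k ≤ n → IsLSUS S n k j →
      ∀ i j', 1 ≤ i → i ≤ k → IsLSUS S n i j' → j' ≤ j) := by
  exact ⟨fun i j j' h2 _ hj hj' => lsus_step S n i j j' h2 hj hj',
    fun k j _ _ hj i j' hi1 hik hj' => lsus_main S n k j hj i j' hi1 hik hj'⟩
end

section
/- Let k ≤ i < j be positions of S and suppose both Candidate_i^k and Candidate_j^k exist. Then |Candidate_i^k| ≤ |Candidate_j^k|. -/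
variable {α : Type*}

/-- `S[a..b]` is `Candidate_i^k`: a shortest substring among those of
`{LSUS_1, …, LSUS_k}` that exist and cover position `i`. -/
def IsCandidate (S : ℕ → α) (n k i a b : ℕ) : Prop :=
  IsLSUS S n a b ∧ a ≤ k ∧ a ≤ i ∧ i ≤ b ∧
    ∀ a' b', IsLSUS S n a' b' → a' ≤ k → a' ≤ i → i ≤ b' → b - a ≤ b' - a'

/-- Let `k ≤ i < j` be positions of `S` and suppose both `Candidate_i^k` and
`Candidate_j^k` exist. Then `|Candidate_i^k| ≤ |Candidate_j^k|`. -/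
theorem candidate_length_mono (S : ℕ → α) (n k i j a b a' b' : ℕ)
    (hki : k ≤ i) (hij : i < j)
    (hci : IsCandidate S n k i a b) (hcj : IsCandidate S n k j a' b') :
    b - a + 1 ≤ b' - a' + 1 := by
  have h := hci.2.2.2.2 a' b' hcj.1 hcj.2.1 (le_trans hcj.2.1 hki) (le_trans hij.le hcj.2.2.2.1)
  omega
end

section
/- If S[i..j] is a shortest unique substring covering position k and j > k (its right boundary lies strictly beyond k), then S[i..j] = LSUS_i, i.e., every proper prefix of S[i..j] is a repeat. -/
variable {α : Type*}

lemma isUnique_extend (S : ℕ → α) (n i j j' : ℕ) (h : IsUnique S n i j)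
    (hjj' : j ≤ j') (hn : j' ≤ n) : IsUnique S n i j' := by
  obtain ⟨h1, h2, h3, h4⟩ := h
  refine ⟨h1, h2.trans hjj', hn, ?_⟩
  rintro ⟨i', hi1, hi2, hi3, hi4⟩
  exact h4 ⟨i', hi1, hi2, by omega, fun d hd => hi4 d (by omega)⟩

/-- If `S[i..j]` is a shortest unique substring covering position `k` and `j > k`,
then `S[i..j] = LSUS_i`. -/
theorem sus_beyond_is_lsus (S : ℕ → α) (n k i j : ℕ)
    (h : IsSUS S n k i j) (hkj : k < j) :
    IsLSUS S n i j := by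
  obtain ⟨hu, hik, hkj', hmin⟩ := h
  refine ⟨hu, fun j' hu' => ?_⟩
  obtain ⟨h1, h2, h3, h4⟩ := hu'
  have hun : j ≤ n := hu.2.2.1
  have hm : IsUnique S n i (max j' k) :=
    isUnique_extend S n i j' (max j' k) ⟨h1, h2, h3, h4⟩ (le_max_left _ _) (by omega)
  have := hmin i (max j' k) hm hik (le_max_right _ _)
  omega
end

section
/- If S[i..k] is a shortest unique substring covering position k with i < k, then for every position t with i < t ≤ k for which LSUS_t exists, |LSUS_t| ≥ k − i + 1. -/
variable {α : Type*}

/-- If `S[i..k]` is a shortest unique substring covering position `k` with `i < k`,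
then for every position `t` with `i < t ≤ k` for which `LSUS_t` exists,
`|LSUS_t| ≥ k − i + 1`. -/
theorem lsus_length_lower_bound (S : ℕ → α) (n k i : ℕ) (hik : i < k)
    (h : IsSUS S n k i k) :
    ∀ t j, i < t → t ≤ k → IsLSUS S n t j → k - i + 1 ≤ j - t + 1 := by
  intro t j hit htk hl
  obtain ⟨⟨h1t, htj, hjn, hne⟩, _⟩ := hl
  by_cases hjk : k ≤ j
  · have := h.2.2.2 t j ⟨h1t, htj, hjn, hne⟩ htk hjk
    omega
  · push_neg at hjk
    have hkn : k ≤ n := h.1.2.2.1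
    have huk : IsUnique S n t k := by
      refine ⟨h1t, by omega, hkn, ?_⟩
      rintro ⟨i', h1, hne', hle, hmatch⟩
      exact hne ⟨i', h1, hne', by omega, fun d hd => hmatch d (by omega)⟩
    have := h.2.2.2 t k huk htk le_rfl
    omega
end

section
/- For every k ∈ {2,…,n}, the length |SUS_k| of a shortest unique substring covering k equals the minimum of the set A ∪ B, where A = { |SLS_k| } if some LSUS covers position k (SLS_k being a shortest LSUS covering k) and A = ∅ otherwise, and B = { |SUS_{k−1}| + 1 } if some shortest unique substring covering k−1 ends exactly at position k−1 and B = ∅ otherwise; moreover A ∪ B is nonempty. -/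
variable {α : Type*}

/-- `S[a..b]` is a shortest LSUS covering position `k` (an `SLS_k`). -/
def IsSLS (S : ℕ → α) (n k a b : ℕ) : Prop :=
  IsLSUS S n a b ∧ a ≤ k ∧ k ≤ b ∧
    ∀ a' b', IsLSUS S n a' b' → a' ≤ k → k ≤ b' → b - a ≤ b' - a'

lemma unique_extend (S : ℕ → α) {n i j j' : ℕ} (h : IsUnique S n i j)
    (hjj : j ≤ j') (hj'n : j' ≤ n) : IsUnique S n i j' := by
  obtain ⟨h1, h2, h3, h4⟩ := h
  refine ⟨h1, h2.trans hjj, hj'n, ?_⟩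
  rintro ⟨i', hi'1, hi'ne, hi'n, hmatch⟩
  exact h4 ⟨i', hi'1, hi'ne, by omega, fun d hd => hmatch d (by omega)⟩

/-- For every `k ∈ {2,…,n}`, the length `|SUS_k|` of a shortest unique substring
covering `k` equals the minimum of `A ∪ B`, where `A` is the set of lengths of
shortest LSUSes covering `k` (a singleton `{|SLS_k|}` if some LSUS covers `k`, empty
otherwise) and `B` is the set of values `|SUS_{k-1}| + 1` over shortest unique
substrings covering `k-1` that end exactly at `k-1` (a singleton if such exists,
empty otherwise); moreover `A ∪ B` is nonempty. -/
theorem sus_length_recurrence (S : ℕ → α) (n k i j : ℕ) (hk2 : 2 ≤ k) (hkn : k ≤ n)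
    (hij : IsSUS S n k i j) :
    ({ℓ : ℕ | ∃ a b, IsSLS S n k a b ∧ ℓ = b - a + 1} ∪
      {ℓ : ℕ | ∃ a, IsSUS S n (k - 1) a (k - 1) ∧ ℓ = ((k - 1) - a + 1) + 1}).Nonempty ∧
    j - i + 1 = sInf
      ({ℓ : ℕ | ∃ a b, IsSLS S n k a b ∧ ℓ = b - a + 1} ∪
        {ℓ : ℕ | ∃ a, IsSUS S n (k - 1) a (k - 1) ∧ ℓ = ((k - 1) - a + 1) + 1}) := by
  obtain ⟨hu, hik, hkj, hmin⟩ := hij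
  have hi1 := hu.1
  have hij' := hu.2.1
  have hjn := hu.2.2.1
  set A := {ℓ : ℕ | ∃ a b, IsSLS S n k a b ∧ ℓ = b - a + 1} with hA
  set B := {ℓ : ℕ | ∃ a, IsSUS S n (k - 1) a (k - 1) ∧ ℓ = ((k - 1) - a + 1) + 1} with hB
  have hmT : IsUnique S n i (sInf {j' | IsUnique S n i j'}) :=
    Nat.sInf_mem (⟨j, hu⟩ : Set.Nonempty {j' | IsUnique S n i j'})
  set m := sInf {j' | IsUnique S n i j'} with hm
  have hmmin : ∀ j', IsUnique S n i j' → m ≤ j' := fun j' h => Nat.sInf_le h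
  have hmj : m ≤ j := hmmin j hu
  have him : i ≤ m := hmT.2.1
  have hlsus : IsLSUS S n i m := ⟨hmT, hmmin⟩
  have hmem : j - i + 1 ∈ A ∪ B := by
    by_cases hmk : k ≤ m
    · left
      have hjm : j - i ≤ m - i := hmin i m hmT hik hmk
      refine ⟨i, m, ⟨hlsus, hik, hmk, ?_⟩, by omega⟩
      intro a' b' ha' haa hbb
      have := hmin a' b' ha'.1 haa hbb
      omega
    · push_neg at hmk
      have hk1n : k - 1 ≤ n := by omega
      have huk : IsUnique S n i k := unique_extend S hmT (by omega) hkn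
      have hjk : j = k := by
        have := hmin i k huk hik le_rfl
        omega
      have huk1 : IsUnique S n i (k - 1) := unique_extend S hmT (by omega) hk1n
      right
      refine ⟨i, ⟨huk1, by omega, le_rfl, ?_⟩, by omega⟩
      intro a' b' hu' ha' hb'
      by_cases hbk : k ≤ b'
      · have := hmin a' b' hu' (by omega) hbk
        omega
      · have hb'k : b' = k - 1 := by omega
        have : IsUnique S n a' k := unique_extend S hu' (by omega) hkn
        have := hmin a' k this (by omega) le_rfl
        have := hu'.2.1
        omega
  have hlb : ∀ ℓ ∈ A ∪ B, j - i + 1 ≤ ℓ := by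
    rintro ℓ (⟨a, b, hsls, rfl⟩ | ⟨a, hsus, rfl⟩)
    · have := hmin a b hsls.1.1 hsls.2.1 hsls.2.2.1
      omega
    · obtain ⟨hu', ha', _, _⟩ := hsus
      have huak : IsUnique S n a k := unique_extend S hu' (by omega) hkn
      have := hmin a k huak (by omega) le_rfl
      have := hu'.2.1
      omega
  refine ⟨⟨_, hmem⟩, le_antisymm (le_csInf ⟨_, hmem⟩ hlb) (Nat.sInf_le hmem)⟩
end
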